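/- Let Γ denote the real Gamma function (so Γ(n+3) = (n+2)! for natural n). Then: (a) f(x) ≤ Γ(x+3) for all real x ≥ 10; (b) x²·f(x) ≤ Γ(x+3) for all real x ≥ 14; (c) x·f(x) ≤ Γ(x+3) for all real x ≥ 13. -/

import Mathlib

/-!
Write the three claims as `x ^ k * f x ≤ Γ (x + 3)` with `k = 0, 2, 1`. At integers they
propagate upward by induction: for `x ≥ 11`, `log (1 + t) ≤ t` and `log₃ z ≤ z / 7` give
`f (x + 1) ≤ 4 f x`, while `Γ` gains the factor `n + 3 ≥ 4 · 2 ^ k`. The base cases are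
numerical: a rational bound `log₃ (2x + 1) ≤ p / q` reduces them to inequalities between integer
powers. Monotonicity of `f` and of `Γ` on `[2, ∞)` fills in the non-integer points. On `[10, 11]`
this fails (`f 11 > 12!`); there `f` grows by less than a factor `12` per unit, while
log-convexity of `Γ` gives `Γ (x + 3) ≥ 12! · 12 ^ (x - 10)`.
-/

noncomputable def f (x : ℝ) : ℝ :=
  (2 * x + 1) ^ (2 * Real.logb 3 (2 * x + 1) + 1)

open Real
open scoped Nat

lemma logb_le_div_of_pow_le {b z : ℝ} (hb : 1 < b) (hz : 0 < z) {p q : ℕ} (hq : 0 < q)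
    (h : z ^ q ≤ b ^ p) : logb b z ≤ p / q := by
  rw [le_div_iff₀ (by positivity), mul_comm, ← logb_pow]
  calc logb b (z ^ q) ≤ logb b (b ^ p) := logb_le_logb_of_le hb (by positivity) h
    _ = p := by rw [logb_pow, logb_self_eq_one hb, mul_one]

lemma log_mul_logb {b : ℝ} (hb : 1 < b) (z : ℝ) : log b * logb b z = log z := by
  rw [logb, mul_div_cancel₀ _ (log_pos hb).ne']

lemma log_le_div_seven {z : ℝ} (hz : 23 ≤ z) : log z ≤ z / 7 := by
  have h32 : log 32 = 5 * log 2 := by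
    rw [show (32 : ℝ) = 2 ^ 5 by norm_num, log_pow]; norm_num
  calc log z = log (z / 32) + log 32 := by rw [log_div (by positivity) (by norm_num)]; ring
    _ ≤ (z / 32 - 1) + 5 * log 2 := by
      rw [h32]; gcongr; exact log_le_sub_one_of_pos (by positivity)
    _ ≤ z / 7 := by linarith [log_two_lt_d9]

lemma logb_three_le_div_seven {z : ℝ} (hz : 23 ≤ z) : logb 3 z ≤ z / 7 :=
  calc logb 3 z ≤ log z := div_le_self (log_nonneg (by linarith)) (by linarith [log_three_gt_d9])
    _ ≤ z / 7 := log_le_div_seven hz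

lemma log_Gamma_nat_add_ge {n : ℕ} (hn : 2 ≤ n) {t : ℝ} (ht : 0 < t) :
    log (Gamma n) + t * log (n - 1) ≤ log (Gamma (n + t)) :=
  BohrMollerup.f_add_nat_ge convexOn_log_Gamma
    (fun hy => by simp only [Function.comp_apply, Gamma_add_one hy.ne',
      log_mul hy.ne' (Gamma_pos_of_pos hy).ne']; ring) hn ht

lemma f_pos {x : ℝ} (hx : 0 ≤ x) : 0 < f x :=
  rpow_pos_of_pos (by linarith) _

lemma f_mono {x y : ℝ} (hx : 0 ≤ x) (hxy : x ≤ y) : f x ≤ f y := by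
  have hL : logb 3 (2 * x + 1) ≤ logb 3 (2 * y + 1) :=
    logb_le_logb_of_le (by norm_num) (by linarith) (by linarith)
  have hL0 : 0 ≤ logb 3 (2 * x + 1) := logb_nonneg (by norm_num) (by linarith)
  calc f x ≤ (2 * y + 1) ^ (2 * logb 3 (2 * x + 1) + 1) :=
        rpow_le_rpow (by linarith) (by linarith) (by linarith)
    _ ≤ f y := rpow_le_rpow_of_exponent_le (by linarith) (by linarith)

lemma log_f {x : ℝ} (hx : 0 ≤ x) :
    log (f x) = log 3 * logb 3 (2 * x + 1) * (2 * logb 3 (2 * x + 1) + 1) := by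
  rw [f, log_rpow (by linarith), ← log_mul_logb (b := 3) (by norm_num)]
  ring

lemma log_f_sub_le {x y : ℝ} (hx : 0 ≤ x) (hxy : x ≤ y) :
    log (f y) - log (f x) ≤ 2 * (y - x) / (2 * x + 1) * (4 * logb 3 (2 * y + 1) + 1) := by
  set a := logb 3 (2 * x + 1)
  set b := logb 3 (2 * y + 1)
  have ha : 0 ≤ a := logb_nonneg (by norm_num) (by linarith)
  have hab : a ≤ b := logb_le_logb_of_le (by norm_num) (by linarith) (by linarith)
  have hdiff : log 3 * (b - a) = log ((2 * y + 1) / (2 * x + 1)) := by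
    rw [log_div (by linarith) (by linarith), mul_sub,
      log_mul_logb (by norm_num), log_mul_logb (by norm_num)]
  have hd : log 3 * (b - a) ≤ 2 * (y - x) / (2 * x + 1) := by
    rw [hdiff]
    calc log ((2 * y + 1) / (2 * x + 1)) ≤ (2 * y + 1) / (2 * x + 1) - 1 :=
          log_le_sub_one_of_pos (div_pos (by linarith) (by linarith))
      _ = 2 * (y - x) / (2 * x + 1) := by field_simp; ring
  calc log (f y) - log (f x) = log 3 * (b - a) * (2 * (a + b) + 1) := by
        rw [log_f hx, log_f (hx.trans hxy)]; ring
    _ ≤ 2 * (y - x) / (2 * x + 1) * (4 * b + 1) :=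
        mul_le_mul hd (by linarith) (by linarith) (by positivity)

lemma f_add_one_le_four_mul {x : ℝ} (hx : 11 ≤ x) : f (x + 1) ≤ 4 * f x := by
  have hb : logb 3 (2 * (x + 1) + 1) ≤ (2 * x + 3) / 7 := by
    convert logb_three_le_div_seven (z := 2 * x + 3) (by linarith) using 2; ring
  have hlog4 : 4 / 3 ≤ log 4 := by
    rw [show (4 : ℝ) = 2 ^ 2 by norm_num, log_pow]; push_cast; linarith [log_two_gt_d9]
  have hstep : log (f (x + 1)) - log (f x) ≤ log 4 :=
    calc log (f (x + 1)) - log (f x)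
        ≤ 2 * (x + 1 - x) / (2 * x + 1) * (4 * logb 3 (2 * (x + 1) + 1) + 1) :=
          log_f_sub_le (by linarith) (by linarith)
      _ ≤ 4 / 3 := by rw [div_mul_eq_mul_div, div_le_iff₀ (by linarith)]; linarith
      _ ≤ log 4 := hlog4
  rw [← log_le_log_iff (f_pos (by linarith)) (by linarith [f_pos (x := x) (by linarith)]),
    log_mul (by norm_num) (f_pos (by linarith)).ne']
  linarith

lemma mul_f_le_of_pow_le {x c N : ℝ} {p q : ℕ} (hx : 0 ≤ x) (hc : 0 ≤ c) (hN : 0 ≤ N)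
    (hq : 0 < q) (hlog : (2 * x + 1) ^ q ≤ 3 ^ p)
    (hcert : c ^ q * (2 * x + 1) ^ (2 * p + q) ≤ N ^ q) : c * f x ≤ N := by
  have hL : logb 3 (2 * x + 1) ≤ p / q :=
    logb_le_div_of_pow_le (by norm_num) (by linarith) hq hlog
  have hf : f x ≤ (2 * x + 1) ^ (((2 * p + q : ℕ) : ℝ) / q) := by
    refine rpow_le_rpow_of_exponent_le (by linarith) ?_
    rw [Nat.cast_add, Nat.cast_mul, add_div, mul_div_assoc, div_self (by positivity)]
    push_cast
    linarith
  calc c * f x ≤ c * (2 * x + 1) ^ (((2 * p + q : ℕ) : ℝ) / q) :=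
        mul_le_mul_of_nonneg_left hf hc
    _ ≤ N := by
        refine le_of_pow_le_pow_left₀ hq.ne' hN ?_
        rwa [mul_pow, ← rpow_mul_natCast (by linarith), div_mul_cancel₀ _ (by positivity),
          rpow_natCast]

lemma pow_mul_f_le_factorial {k N : ℕ} (hN : 11 ≤ N) (hk : 4 * 2 ^ k ≤ N + 3)
    (hbase : ((N : ℝ) + 1) ^ k * f (N + 1) ≤ (N + 2)!) {n : ℕ} (hn : N ≤ n) :
    ((n : ℝ) + 1) ^ k * f (n + 1) ≤ (n + 2)! := by
  induction n, hn using Nat.le_induction with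
  | base => exact hbase
  | succ n hn ih =>
    have hn' : (11 : ℝ) ≤ n := by exact_mod_cast hN.trans hn
    have hk' : (4 * 2 ^ k : ℝ) ≤ n + 3 := by exact_mod_cast hk.trans (by omega)
    push_cast
    calc ((n : ℝ) + 1 + 1) ^ k * f (n + 1 + 1)
        ≤ (2 * (n + 1)) ^ k * (4 * f (n + 1)) :=
          mul_le_mul (pow_le_pow_left₀ (by positivity) (by linarith) k)
            (f_add_one_le_four_mul (by linarith)) (f_pos (by positivity)).le (by positivity)
      _ = 4 * 2 ^ k * ((n + 1) ^ k * f (n + 1)) := by rw [mul_pow]; ring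
      _ ≤ (n + 3) * (n + 2)! :=
          mul_le_mul hk' ih (mul_nonneg (by positivity) (f_pos (by positivity)).le) (by positivity)
      _ = (n + 1 + 2)! := by rw [Nat.factorial_succ (n + 2)]; push_cast; ring

lemma pow_mul_f_le_Gamma {k N : ℕ} (hN : 11 ≤ N) (hk : 4 * 2 ^ k ≤ N + 3)
    (hbase : ((N : ℝ) + 1) ^ k * f (N + 1) ≤ (N + 2)!) {x : ℝ} (hx : N ≤ x) :
    x ^ k * f x ≤ Gamma (x + 3) := by
  have hx0 : 0 ≤ x := (Nat.cast_nonneg N).trans hx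
  set n := ⌊x⌋₊
  have hxn : x ≤ n + 1 := (Nat.lt_floor_add_one x).le
  calc x ^ k * f x ≤ ((n : ℝ) + 1) ^ k * f (n + 1) :=
        mul_le_mul (pow_le_pow_left₀ hx0 hxn k) (f_mono hx0 hxn) (f_pos hx0).le (by positivity)
    _ ≤ (n + 2)! := pow_mul_f_le_factorial hN hk hbase (Nat.le_floor hx)
    _ = Gamma (n + 3) := by
        rw [show (n : ℝ) + 3 = (n + 2 : ℕ) + 1 by push_cast; ring, Gamma_nat_eq_factorial]
    _ ≤ Gamma (x + 3) :=
        Gamma_strictMonoOn_Ici.monotoneOn (Set.mem_Ici.2 (by linarith))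
          (Set.mem_Ici.2 (by linarith)) (by linarith [Nat.floor_le hx0])

lemma f_ten_le_factorial : f 10 ≤ 12! := by
  simpa using mul_f_le_of_pow_le (c := 1) (p := 25) (q := 9) (x := 10) (N := (12! : ℝ))
    (by norm_num) (by norm_num) (by positivity) (by norm_num) (by norm_num)
    (by norm_num [Nat.factorial])

lemma f_le_Gamma_of_le_eleven {x : ℝ} (hx : 10 ≤ x) (hx' : x ≤ 11) :
    f x ≤ Gamma (x + 3) := by
  rcases hx.eq_or_lt with rfl | hlt
  · rw [show (10 : ℝ) + 3 = (12 : ℕ) + 1 by norm_num, Gamma_nat_eq_factorial]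
    exact f_ten_le_factorial
  have hGamma : log (12! : ℝ) + (x - 10) * log 12 ≤ log (Gamma (x + 3)) := by
    have := log_Gamma_nat_add_ge (n := 13) (by norm_num) (sub_pos.2 hlt)
    norm_num [Nat.factorial] at this ⊢
    rwa [show 13 + (x - 10) = x + 3 by ring] at this
  have hb : logb 3 (2 * x + 1) ≤ 23 / 7 :=
    (logb_le_logb_of_le (by norm_num) (by linarith) (by linarith)).trans
      (logb_three_le_div_seven le_rfl)
  have hlog12 : 2 ≤ log 12 := by
    have h8 : log 8 = 3 * log 2 := by
      rw [show (8 : ℝ) = 2 ^ 3 by norm_num, log_pow]; norm_num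
    linarith [log_le_log (by norm_num) (by norm_num : (8 : ℝ) ≤ 12), log_two_gt_d9]
  have hf : log (f x) - log (f 10) ≤ (x - 10) * log 12 :=
    calc log (f x) - log (f 10)
        ≤ 2 * (x - 10) / (2 * 10 + 1) * (4 * logb 3 (2 * x + 1) + 1) :=
          log_f_sub_le (by norm_num) hx
      _ ≤ (x - 10) * log 12 := by
          rw [div_mul_eq_mul_div, div_le_iff₀ (by norm_num)]; nlinarith
  have h10 : log (f 10) ≤ log (12! : ℝ) := log_le_log (f_pos (by norm_num)) f_ten_le_factorial
  rw [← log_le_log_iff (f_pos (by linarith)) (Gamma_pos_of_pos (by linarith))]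
  linarith

/-- **Lemma A3:** with `Γ` the real Gamma function (so `Γ(n+3) = (n+2)!`):
(a) `f(x) ≤ Γ(x+3)` for `x ≥ 10`; (b) `x²·f(x) ≤ Γ(x+3)` for `x ≥ 14`;
(c) `x·f(x) ≤ Γ(x+3)` for `x ≥ 13`. -/
theorem stmt16 :
    (∀ x : ℝ, 10 ≤ x → f x ≤ Real.Gamma (x + 3)) ∧
    (∀ x : ℝ, 14 ≤ x → x ^ 2 * f x ≤ Real.Gamma (x + 3)) ∧
    (∀ x : ℝ, 13 ≤ x → x * f x ≤ Real.Gamma (x + 3)) := by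
  refine ⟨fun x hx => ?_, fun x hx => ?_, fun x hx => ?_⟩
  · rcases le_or_gt x 11 with hx' | hx'
    · exact f_le_Gamma_of_le_eleven hx hx'
    · have hbase : ((11 : ℕ) + 1 : ℝ) ^ 0 * f ((11 : ℕ) + 1) ≤ (11 + 2)! :=
        mul_f_le_of_pow_le (p := 3) (q := 1) (by positivity) (by positivity) (by positivity)
          (by norm_num) (by norm_num) (by norm_num [Nat.factorial])
      simpa using pow_mul_f_le_Gamma le_rfl (by norm_num) hbase (by exact_mod_cast hx'.le)
  · have hbase : ((14 : ℕ) + 1 : ℝ) ^ 2 * f ((14 : ℕ) + 1) ≤ (14 + 2)! :=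
      mul_f_le_of_pow_le (p := 19) (q := 6) (by positivity) (by positivity) (by positivity)
        (by norm_num) (by norm_num) (by norm_num [Nat.factorial])
    exact pow_mul_f_le_Gamma (by norm_num) (by norm_num) hbase (by exact_mod_cast hx)
  · have hbase : ((13 : ℕ) + 1 : ℝ) ^ 1 * f ((13 : ℕ) + 1) ≤ (13 + 2)! :=
      mul_f_le_of_pow_le (p := 13) (q := 4) (by positivity) (by positivity) (by positivity)
        (by norm_num) (by norm_num) (by norm_num [Nat.factorial])
    simpa using pow_mul_f_le_Gamma (by norm_num) (by norm_num) hbase (by exact_mod_cast hx)
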